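/- (Sure optimality implies identification with the Snell envelope) Let ρ satisfy (C1)-(C4) and subadditivity (P1), let Y* be the upper Snell envelope of the adapted cash-flow H, and let M be any ρ-martingale. Fix i ∈ {0,...,T}. If the random variable θ_i := max_{i ≤ j ≤ T}(H_j − M_j + M_i) is F_i-measurable, then θ_i = Y*_i almost surely. -/

import Mathlib

open MeasureTheory

/-! Since `θ_i` is `F_i`-measurable, translation invariance gives `ρ_i(θ_i) = θ_i`, so the dual
inequality yields `Y*_i ≤ θ_i`. Conversely, measurability of `θ_i` makes the first time `τ ≥ i` at
which `H_j - M_j + M_i` reaches `θ_i` a stopping time, and `H_τ = M_τ + (θ_i - M_i)`. Optional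
sampling for `ρ`-martingales, `ρ_i(M_τ) = M_i`, follows by backward induction on the stopped
process `M_{τ ∧ s}` using recursiveness and regularity; with translation invariance it gives
`ρ_i(H_τ) = θ_i ≤ Y*_i`. -/

section IndicatorCommuting

variable {Ω : Type*} {𝓕 : MeasurableSpace Ω} {φ : (Ω → ℝ) → Ω → ℝ}

theorem map_zero_of_indicator_comm
    (hreg : ∀ (X : Ω → ℝ) (A : Set Ω), MeasurableSet[𝓕] A → φ (A.indicator X) = A.indicator (φ X)) :
    φ 0 = 0 := by
  simpa [Pi.zero_def] using hreg 0 ∅ MeasurableSet.empty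

theorem map_eq_self_of_measurable
    (hreg : ∀ (X : Ω → ℝ) (A : Set Ω), MeasurableSet[𝓕] A → φ (A.indicator X) = A.indicator (φ X))
    (hcti : ∀ X Y : Ω → ℝ, Measurable[𝓕] Y → φ (X + Y) = φ X + Y)
    {Y : Ω → ℝ} (hY : Measurable[𝓕] Y) : φ Y = Y := by
  simpa [map_zero_of_indicator_comm hreg] using hcti 0 Y hY

end IndicatorCommuting

section StoppingTimes

variable {Ω : Type*} {m : MeasurableSpace Ω} {F : Filtration ℕ m}

theorem Adapted.measurable_stopped {M : ℕ → Ω → ℝ} (hM : Adapted F M) {τ : Ω → ℕ}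
    (hτ : IsStoppingTime F fun ω => (τ ω : WithTop ℕ)) (s : ℕ) :
    Measurable[F s] fun ω => M (min (τ ω) s) ω := by
  convert (hM.stronglyAdapted.stoppedProcess_of_discrete hτ s).measurable using 1
  funext ω
  rw [stoppedProcess, min_comm]
  norm_cast

theorem exists_isStoppingTime_hits_level {i T : ℕ} (hi : i ≤ T) {f : ℕ → Ω → ℝ}
    (hf : ∀ j, i ≤ j → Measurable[F j] (f j)) {S : Ω → ℝ} (hS : Measurable[F i] S)
    (hhit : ∀ ω, ∃ j ∈ Set.Icc i T, f j ω = S ω) :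
    ∃ τ : Ω → ℕ, IsStoppingTime F (fun ω => (τ ω : WithTop ℕ)) ∧
      (∀ ω, τ ω ∈ Set.Icc i T) ∧ ∀ ω, f (τ ω) ω = S ω := by
  classical
  -- `f j - S` need not be `F j`-measurable before time `i`, where it plays no role
  let gap : ℕ → Ω → ℝ := fun j => if i ≤ j then f j - S else 0
  have hgap : Adapted F gap := fun j => by
    by_cases hj : i ≤ j
    · simpa [gap, hj] using (hf j hj).sub (hS.mono (F.mono hj) le_rfl)
    · simp only [gap, hj, if_false]
      exact measurable_const
  refine ⟨hittingBtwn gap {0} i T, hgap.isStoppingTime_hittingBtwn (measurableSet_singleton 0),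
    hittingBtwn_mem_Icc hi, fun ω => ?_⟩
  have hmem : gap (hittingBtwn gap {0} i T ω) ω ∈ ({0} : Set ℝ) := by
    refine hittingBtwn_mem_set ?_
    obtain ⟨j, hj, hjS⟩ := hhit ω
    exact ⟨j, hj, by simp [gap, hj.1, hjS]⟩
  simpa [gap, (hittingBtwn_mem_Icc (u := gap) (s := {0}) hi ω).1, sub_eq_zero] using hmem

theorem exists_isStoppingTime_eq_sup' {i T : ℕ} (hi : i ≤ T) {f : ℕ → Ω → ℝ}
    (hf : ∀ j, i ≤ j → Measurable[F j] (f j))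
    (hsup : Measurable[F i] fun ω => (Finset.Icc i T).sup' (Finset.nonempty_Icc.mpr hi) (f · ω)) :
    ∃ τ : Ω → ℕ, IsStoppingTime F (fun ω => (τ ω : WithTop ℕ)) ∧ (∀ ω, τ ω ∈ Set.Icc i T) ∧
      ∀ ω, f (τ ω) ω = (Finset.Icc i T).sup' (Finset.nonempty_Icc.mpr hi) (f · ω) :=
  exists_isStoppingTime_hits_level hi hf hsup fun ω => by
    obtain ⟨j, hj, hjmax⟩ := Finset.exists_mem_eq_sup' (Finset.nonempty_Icc.mpr hi) (f · ω)
    exact ⟨j, Finset.mem_Icc.mp hj, hjmax.symm⟩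

end StoppingTimes

section RhoMartingale

variable {Ω : Type*} {m : MeasurableSpace Ω} {F : Filtration ℕ m} {T : ℕ}
  {ρ : ℕ → (Ω → ℝ) → Ω → ℝ} {M : ℕ → Ω → ℝ} {τ : Ω → ℕ}

theorem rho_stopped_succ_eq
    (hreg : ∀ s, s ≤ T → ∀ (X : Ω → ℝ) (A : Set Ω), MeasurableSet[F s] A →
      ρ s (A.indicator X) = A.indicator (ρ s X))
    (hcti : ∀ s, s ≤ T → ∀ (X Y : Ω → ℝ), Measurable[F s] Y → ρ s (X + Y) = ρ s X + Y)
    (hM : Adapted F M) (hMmart : ∀ s, s < T → M s = ρ s (M (s + 1)))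
    (hτ : IsStoppingTime F fun ω => (τ ω : WithTop ℕ)) {s : ℕ} (hs : s < T) :
    ρ s (fun ω => M (min (τ ω) (s + 1)) ω) = fun ω => M (min (τ ω) s) ω := by
  set A := {ω | τ ω ≤ s}
  have hA : MeasurableSet[F s] A := by
    show MeasurableSet[F s] {ω | τ ω ≤ s}
    simpa using hτ.measurableSet_le s
  have hsplit : (fun ω => M (min (τ ω) (s + 1)) ω) =
      Aᶜ.indicator (M (s + 1)) + A.indicator fun ω => M (min (τ ω) s) ω := by
    funext ω
    by_cases h : τ ω ≤ s
    · simp [A, h, min_eq_left (h.trans s.le_succ)]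
    · simp [A, h, min_eq_right (Nat.succ_le_of_lt (not_le.mp h))]
  rw [hsplit, hcti s hs.le _ _ ((Adapted.measurable_stopped hM hτ s).indicator hA),
    hreg s hs.le _ _ hA.compl, ← hMmart s hs]
  funext ω
  by_cases h : τ ω ≤ s
  · simp [A, h]
  · simp [A, h, min_eq_right (not_le.mp h).le]

theorem rho_stoppedValue_eq_min
    (hreg : ∀ s, s ≤ T → ∀ (X : Ω → ℝ) (A : Set Ω), MeasurableSet[F s] A →
      ρ s (A.indicator X) = A.indicator (ρ s X))
    (hrec : ∀ s, s < T → ∀ (X : Ω → ℝ), ρ s (ρ (s + 1) X) = ρ s X)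
    (hcti : ∀ s, s ≤ T → ∀ (X Y : Ω → ℝ), Measurable[F s] Y → ρ s (X + Y) = ρ s X + Y)
    (hM : Adapted F M) (hMmart : ∀ s, s < T → M s = ρ s (M (s + 1)))
    (hτ : IsStoppingTime F fun ω => (τ ω : WithTop ℕ)) (hτT : ∀ ω, τ ω ≤ T)
    {s : ℕ} (hs : s ≤ T) :
    ρ s (fun ω => M (τ ω) ω) = fun ω => M (min (τ ω) s) ω := by
  induction hs using Nat.decreasingInduction with
  | self =>
    have hstop : (fun ω => M (min (τ ω) T) ω) = fun ω => M (τ ω) ω := by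
      simp [min_eq_left (hτT _)]
    rw [hstop]
    exact map_eq_self_of_measurable (hreg T le_rfl) (hcti T le_rfl)
      (hstop ▸ Adapted.measurable_stopped hM hτ T)
  | of_succ s hs ih =>
    rw [← hrec s hs, ih, rho_stopped_succ_eq hreg hcti hM hMmart hτ hs]

theorem rho_stoppedValue_eq_of_le
    (hreg : ∀ s, s ≤ T → ∀ (X : Ω → ℝ) (A : Set Ω), MeasurableSet[F s] A →
      ρ s (A.indicator X) = A.indicator (ρ s X))
    (hrec : ∀ s, s < T → ∀ (X : Ω → ℝ), ρ s (ρ (s + 1) X) = ρ s X)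
    (hcti : ∀ s, s ≤ T → ∀ (X Y : Ω → ℝ), Measurable[F s] Y → ρ s (X + Y) = ρ s X + Y)
    (hM : Adapted F M) (hMmart : ∀ s, s < T → M s = ρ s (M (s + 1)))
    (hτ : IsStoppingTime F fun ω => (τ ω : WithTop ℕ)) {i : ℕ} (hi : i ≤ T)
    (hτi : ∀ ω, τ ω ∈ Set.Icc i T) :
    ρ i (fun ω => M (τ ω) ω) = M i := by
  rw [rho_stoppedValue_eq_min hreg hrec hcti hM hMmart hτ (fun ω => (hτi ω).2) hi]
  funext ω
  rw [min_eq_right (hτi ω).1]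

end RhoMartingale

theorem dmu_surely_optimal_identification_general
    {Ω : Type*} {m : MeasurableSpace Ω} (μ : Measure Ω)
    (F : MeasureTheory.Filtration ℕ m) (T : ℕ)
    (ρ : ℕ → (Ω → ℝ) → (Ω → ℝ))
    (hreg : ∀ s, s ≤ T → ∀ (X : Ω → ℝ) (A : Set Ω), MeasurableSet[F s] A →
      ρ s (A.indicator X) = A.indicator (ρ s X))
    (hrec : ∀ s, s < T → ∀ (X : Ω → ℝ), ρ s (ρ (s + 1) X) = ρ s X)
    (hcti : ∀ s, s ≤ T → ∀ (X Y : Ω → ℝ), Measurable[F s] Y →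
      ρ s (X + Y) = ρ s X + Y)
    (H : ℕ → Ω → ℝ) (hHadapted : ∀ s, Measurable[F s] (H s))
    (M : ℕ → Ω → ℝ) (hMadapted : ∀ s, Measurable[F s] (M s))
    (hMmart : ∀ s, s < T → M s = ρ s (M (s + 1)))
    (Ystar : ℕ → Ω → ℝ)
    (i : ℕ) (hi : i ≤ T)
    -- `Y*_i` dominates `ρ_i (H_τ)` for every stopping time `i ≤ τ ≤ T`
    (hlow : ∀ τ : Ω → ℕ, (∀ j, MeasurableSet[F j] {ω | τ ω = j}) →
      (∀ ω, i ≤ τ ω ∧ τ ω ≤ T) →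
      ∀ ω, ρ i (fun ω' => H (τ ω') ω') ω ≤ Ystar i ω)
    -- dual inequality for the `ρ`-martingale `M`
    (hdual : ∀ ω, Ystar i ω ≤
      ρ i (fun ω' => (Finset.Icc i T).sup' (Finset.nonempty_Icc.mpr hi)
        (fun j => H j ω' + M i ω' - M j ω')) ω)
    (hθmeas : Measurable[F i]
      (fun ω => (Finset.Icc i T).sup' (Finset.nonempty_Icc.mpr hi)
        (fun j => H j ω - M j ω + M i ω))) :
    (fun ω => (Finset.Icc i T).sup' (Finset.nonempty_Icc.mpr hi)
        (fun j => H j ω - M j ω + M i ω)) =ᵐ[μ] Ystar i := by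
  set θ := fun ω => (Finset.Icc i T).sup' (Finset.nonempty_Icc.mpr hi)
    (fun j => H j ω - M j ω + M i ω)
  have hρθ : ρ i θ = θ := map_eq_self_of_measurable (hreg i hi) (hcti i hi) hθmeas
  have hdual_eq : (fun ω => (Finset.Icc i T).sup' (Finset.nonempty_Icc.mpr hi)
      (fun j => H j ω + M i ω - M j ω)) = θ :=
    funext fun ω => Finset.sup'_congr _ rfl fun j _ => by ring
  have hupper : ∀ ω, Ystar i ω ≤ θ ω := fun ω => (hdual ω).trans_eq (by rw [hdual_eq, hρθ])
  obtain ⟨τ, hτ, hτi, hτθ⟩ := exists_isStoppingTime_eq_sup' (F := F) hi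
    (f := fun j ω => H j ω - M j ω + M i ω)
    (fun j hj => ((hHadapted j).sub (hMadapted j)).add ((hMadapted i).mono (F.mono hj) le_rfl))
    hθmeas
  have hHτ : (fun ω => H (τ ω) ω) = (fun ω => M (τ ω) ω) + (θ - M i) := by
    funext ω
    have := hτθ ω
    simp only [Pi.add_apply, Pi.sub_apply]
    linarith
  have hρHτ : ρ i (fun ω => H (τ ω) ω) = θ := by
    rw [hHτ, hcti i hi _ _ (hθmeas.sub (hMadapted i)),
      rho_stoppedValue_eq_of_le hreg hrec hcti hMadapted hMmart hτ hi hτi, add_sub_cancel]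
  have hlower : ∀ ω, θ ω ≤ Ystar i ω := fun ω =>
    hρHτ ▸ hlow τ (fun j => by simpa using hτ.measurableSet_eq j) hτi ω
  exact Filter.Eventually.of_forall fun ω => le_antisymm (hlower ω) (hupper ω)

/-- Sure optimality implies identification with the Snell envelope: for a DMU
`ρ` satisfying (C1)–(C4) and subadditivity (P1), a `ρ`-martingale `M`, and
the upper Snell envelope `Y*` of `H`, if
`θ_i := max_{i ≤ j ≤ T} (H_j - M_j + M_i)` is `F_i`-measurable, then
`θ_i = Y*_i` almost surely. -/
theorem dmu_surely_optimal_identification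
    {Ω : Type*} {m : MeasurableSpace Ω} (μ : Measure Ω) [IsProbabilityMeasure μ]
    (F : MeasureTheory.Filtration ℕ m) (T : ℕ)
    (ρ : ℕ → (Ω → ℝ) → (Ω → ℝ))
    (hmeas : ∀ s (X : Ω → ℝ), Measurable[F s] (ρ s X))
    (hmono : ∀ s, s ≤ T → ∀ (X Y : Ω → ℝ), X ≤ Y → ρ s X ≤ ρ s Y)
    (hreg : ∀ s, s ≤ T → ∀ (X : Ω → ℝ) (A : Set Ω), MeasurableSet[F s] A →
      ρ s (A.indicator X) = A.indicator (ρ s X))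
    (hrec : ∀ s, s < T → ∀ (X : Ω → ℝ), ρ s (ρ (s + 1) X) = ρ s X)
    (hcti : ∀ s, s ≤ T → ∀ (X Y : Ω → ℝ), Measurable[F s] Y →
      ρ s (X + Y) = ρ s X + Y)
    (hsub : ∀ s, s ≤ T → ∀ (X Y : Ω → ℝ), ρ s (X + Y) ≤ ρ s X + ρ s Y)
    (H : ℕ → Ω → ℝ) (hHadapted : ∀ s, Measurable[F s] (H s))
    (M : ℕ → Ω → ℝ) (hMadapted : ∀ s, Measurable[F s] (M s))
    (hMmart : ∀ s, s < T → M s = ρ s (M (s + 1)))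
    (Ystar : ℕ → Ω → ℝ)
    (i : ℕ) (hi : i ≤ T)
    -- `Y*_i` dominates `ρ_i (H_τ)` for every stopping time `i ≤ τ ≤ T`
    (hlow : ∀ τ : Ω → ℕ, (∀ j, MeasurableSet[F j] {ω | τ ω = j}) →
      (∀ ω, i ≤ τ ω ∧ τ ω ≤ T) →
      ∀ ω, ρ i (fun ω' => H (τ ω') ω') ω ≤ Ystar i ω)
    -- dual inequality for the `ρ`-martingale `M`
    (hdual : ∀ ω, Ystar i ω ≤
      ρ i (fun ω' => (Finset.Icc i T).sup' (Finset.nonempty_Icc.mpr hi)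
        (fun j => H j ω' + M i ω' - M j ω')) ω)
    (hθmeas : Measurable[F i]
      (fun ω => (Finset.Icc i T).sup' (Finset.nonempty_Icc.mpr hi)
        (fun j => H j ω - M j ω + M i ω))) :
    (fun ω => (Finset.Icc i T).sup' (Finset.nonempty_Icc.mpr hi)
        (fun j => H j ω - M j ω + M i ω)) =ᵐ[μ] Ystar i :=
  dmu_surely_optimal_identification_general μ F T ρ hreg hrec hcti H hHadapted M hMadapted hMmart
    Ystar i hi hlow hdual hθmeas
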